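/- There exists an index j ∈ {1,…,κ} such that the label of γ_j belongs to 𝒢 and ℛ_j ⊆ ℬ (i.e., the cyclic interval I_j contains no common residue with a good label); in particular j ∈ 𝒩, so 𝒩 is nonempty. -/
import Mathlib


/-- `rmod Γ x` is the representative of `x` modulo `Γ` in `[0, Γ)` (for `Γ > 0`). -/
noncomputable def rmod (Γ x : ℝ) : ℝ := x - Γ * (⌊x / Γ⌋ : ℝ)

lemma rmod_nonneg {Γ : ℝ} (hΓ : 0 < Γ) (x : ℝ) : 0 ≤ rmod Γ x := by
  have h := Int.floor_le (x / Γ)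
  have h2 : Γ * (⌊x / Γ⌋ : ℝ) ≤ Γ * (x / Γ) := by
    exact mul_le_mul_of_nonneg_left h hΓ.le
  have hx : Γ * (x / Γ) = x := by field_simp
  unfold rmod; linarith

lemma rmod_lt {Γ : ℝ} (hΓ : 0 < Γ) (x : ℝ) : rmod Γ x < Γ := by
  have h := Int.lt_floor_add_one (x / Γ)
  have h2 : Γ * (x / Γ) < Γ * ((⌊x / Γ⌋ : ℝ) + 1) := by
    exact mul_lt_mul_of_pos_left h hΓ
  have hx : Γ * (x / Γ) = x := by field_simp
  unfold rmod; nlinarith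

lemma rmod_eq_self {Γ x : ℝ} (hΓ : 0 < Γ) (h0 : 0 ≤ x) (h1 : x < Γ) : rmod Γ x = x := by
  have : ⌊x / Γ⌋ = 0 := by
    rw [Int.floor_eq_zero_iff]
    constructor
    · exact div_nonneg h0 hΓ.le
    · rw [div_lt_one hΓ]; exact h1
  unfold rmod; rw [this]; simp

lemma sub_rmod_eq (Γ x : ℝ) : x - rmod Γ x = (⌊x / Γ⌋ : ℤ) * Γ := by
  unfold rmod; push_cast; ring

lemma exists_int_sub_rmod (Γ x : ℝ) : ∃ n : ℤ, x - rmod Γ x = (n : ℝ) * Γ :=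
  ⟨⌊x / Γ⌋, sub_rmod_eq Γ x⟩

lemma rmod_congr {Γ : ℝ} (hΓ : 0 < Γ) {x y : ℝ} (h : ∃ n : ℤ, x - y = (n : ℝ) * Γ) :
    rmod Γ x = rmod Γ y := by
  obtain ⟨n, hn⟩ := h
  have hx : x = y + (n : ℝ) * Γ := by linarith
  subst hx
  unfold rmod
  have hf : ⌊(y + (n : ℝ) * Γ) / Γ⌋ = ⌊y / Γ⌋ + n := by
    rw [add_div, mul_div_assoc, div_self hΓ.ne', mul_one, Int.floor_add_intCast]
  rw [hf]; push_cast; ring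

lemma exists_gap {N : ℕ} (hN : 1 ≤ N) {δ Γ : ℝ} (hδ : 0 < δ)
    (hΓ : Γ = 4 * N * δ) (p : Fin N → ℝ) :
    ∃ i, ∀ j, rmod Γ (p j - p i) = 0 ∨ 4 * δ ≤ rmod Γ (p j - p i) := by
  have hNpos : (0 : ℝ) < N := by exact_mod_cast hN
  have hΓpos : 0 < Γ := by rw [hΓ]; positivity
  by_contra hcon
  push_neg at hcon
  choose f hf1 hf2 using hcon
  set d : Fin N → ℝ := fun i => rmod Γ (p (f i) - p i) with hd
  have hd0 : ∀ i, 0 < d i := fun i =>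
    lt_of_le_of_ne (rmod_nonneg hΓpos _) (Ne.symm (hf1 i))
  have hd4 : ∀ i, d i < 4 * δ := hf2
  set F : ℕ → Fin N := fun k => f^[k] ⟨0, hN⟩ with hF
  set X : ℕ → ℝ := fun k => ∑ m ∈ Finset.range k, d (F m) with hX
  have hXmono : StrictMono X := by
    apply strictMono_nat_of_lt_succ
    intro n
    have : X (n + 1) = X n + d (F n) := Finset.sum_range_succ _ _
    rw [this]; linarith [hd0 (F n)]
  have hX0 : ∀ k, 0 ≤ X k := by
    intro k
    exact Finset.sum_nonneg fun m _ => (hd0 (F m)).le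
  have hXlt : ∀ k, k ≤ N → X k < Γ := by
    intro k hk
    have h1 : X k ≤ X N := hXmono.monotone hk
    have h2 : X N < 4 * δ * N := by
      have : X N < ∑ _m ∈ Finset.range N, (4 * δ) := by
        apply Finset.sum_lt_sum_of_nonempty
        · exact Finset.nonempty_range_iff.mpr (Nat.one_le_iff_ne_zero.mp hN)
        · intro i _; exact hd4 (F i)
      simpa [mul_comm] using this
    rw [hΓ]; nlinarith
  have hcong : ∀ k, ∃ n : ℤ, (p (F k) - p (F 0)) - X k = (n : ℝ) * Γ := by
    intro k
    induction k with
    | zero => exact ⟨0, by simp [hX]⟩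
    | succ k ih =>
      obtain ⟨n, hn⟩ := ih
      obtain ⟨m, hm⟩ := exists_int_sub_rmod Γ (p (f (F k)) - p (F k))
      refine ⟨n + m, ?_⟩
      have hFs : F (k + 1) = f (F k) := Function.iterate_succ_apply' f k _
      have hXs : X (k + 1) = X k + d (F k) := Finset.sum_range_succ _ _
      rw [hFs, hXs]
      have : d (F k) = rmod Γ (p (f (F k)) - p (F k)) := rfl
      push_cast
      linarith [this ▸ hm]
  have hrmod : ∀ k, k ≤ N → rmod Γ (p (F k) - p (F 0)) = X k := by
    intro k hk
    have := rmod_congr hΓpos (hcong k)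
    rw [this, rmod_eq_self hΓpos (hX0 k) (hXlt k hk)]
  -- pigeonhole on Fin (N+1) → Fin N
  have hninj : ¬ Function.Injective (fun k : Fin (N + 1) => F (k : ℕ)) := by
    intro hinj
    have := Fintype.card_le_of_injective _ hinj
    simp at this
  rw [Function.not_injective_iff] at hninj
  obtain ⟨a, b, hab, hne⟩ := hninj
  have hXab : X (a : ℕ) = X (b : ℕ) := by
    have ha := hrmod a (Nat.lt_succ_iff.mp a.isLt)
    have hb := hrmod b (Nat.lt_succ_iff.mp b.isLt)
    rw [← ha, ← hb, hab]
  have : (a : ℕ) = (b : ℕ) := hXmono.injective hXab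
  exact hne (Fin.ext this)

lemma circle_main {δ Γ : ℝ} (hδ : 0 < δ) (hΓpos : 0 < Γ) (hΓ4 : 4 * δ ≤ Γ)
    (S : Finset ℝ) (hS : S.Nonempty) (q : ℝ)
    (hq : ∀ z ∈ S, rmod Γ (z - q) < 2 * δ ∨ 4 * δ < rmod Γ (z - q)) :
    ∃ x ∈ S, ∀ y ∈ S, ¬(0 < rmod Γ (y - x) ∧ rmod Γ (y - x) ≤ 2 * δ) := by
  obtain ⟨x, hxS, hmax⟩ := S.exists_max_image (fun z => rmod Γ (z - q - 2 * δ)) hS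
  refine ⟨x, hxS, ?_⟩
  rintro y hyS ⟨hs0, hs2⟩
  set s := rmod Γ (y - x) with hsdef
  set ψx := rmod Γ (x - q - 2 * δ) with hψxdef
  set ψy := rmod Γ (y - q - 2 * δ) with hψydef
  have hψxlt : ψx < Γ := rmod_lt hΓpos _
  have hψy0 : 0 ≤ ψy := rmod_nonneg hΓpos _
  have hψycong : ψy = rmod Γ (ψx + s) := by
    apply rmod_congr hΓpos
    obtain ⟨n, hn⟩ := exists_int_sub_rmod Γ (x - q - 2 * δ)
    obtain ⟨m, hm⟩ := exists_int_sub_rmod Γ (y - x)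
    exact ⟨n + m, by push_cast; linarith⟩
  have hmaxy : ψy ≤ ψx := hmax y hyS
  rcases lt_or_ge (ψx + s) Γ with hlt | hge
  · have h0 : 0 ≤ ψx + s := by
      have := rmod_nonneg hΓpos (x - q - 2 * δ)
      linarith
    rw [rmod_eq_self hΓpos h0 hlt] at hψycong
    linarith
  · have heq : ψy = ψx + s - Γ := by
      rw [hψycong]
      have hcg : rmod Γ (ψx + s) = rmod Γ (ψx + s - Γ) := by
        apply rmod_congr hΓpos
        exact ⟨1, by push_cast; ring⟩
      rw [hcg]
      apply rmod_eq_self hΓpos (by linarith)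
      have hsΓ : s < Γ := rmod_lt hΓpos _
      linarith
    have hψylt : ψy < 2 * δ := by rw [heq]; linarith
    -- u(y) = ψy + 2δ ∈ [2δ, 4δ)
    have huy : rmod Γ (y - q) = ψy + 2 * δ := by
      have hcg : rmod Γ (y - q) = rmod Γ (ψy + 2 * δ) := by
        apply rmod_congr hΓpos
        obtain ⟨n, hn⟩ := exists_int_sub_rmod Γ (y - q - 2 * δ)
        exact ⟨n, by push_cast; linarith⟩
      rw [hcg]
      exact rmod_eq_self hΓpos (by linarith) (by linarith)
    rcases hq y hyS with h | h <;> rw [huy] at h <;> linarith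

/-- There exists a common residue `γ_j` with a good label whose cyclic interval
`I_j` contains no common residue with a good label (so `ℛ_j ⊆ ℬ`); in
particular `j ∈ 𝒩`, so `𝒩` is nonempty. -/
theorem exists_good_residue_with_bad_only_interval
    (N L K : ℕ) (hN : 1 ≤ N) (hK : 1 ≤ K) (hKL : K ≤ L)
    (δ : ℝ) (hδ : 0 < δ) (Γ : ℝ) (hΓ : Γ = 4 * N * δ)
    (G B : Finset (Fin L)) (hGB : G ∪ B = Finset.univ) (hGBdisj : Disjoint G B)
    (hB : B.card ≤ (L - K) / 2)
    (rc : Fin N → ℝ) (hrc : ∀ i, 0 ≤ rc i ∧ rc i < Γ)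
    (Δ : Fin N → Fin L → ℝ) (hΔ : ∀ i, ∀ l ∈ G, |Δ i l| < δ)
    (tilde : Fin N → Fin L → ℝ)
    (htilde : ∀ i l, tilde i l = rmod Γ (rc i + Δ i l))
    (hinj : Function.Injective (fun p : Fin N × Fin L => tilde p.1 p.2))
    (γ : Fin (N * L) → ℝ) (hγmono : StrictMono γ)
    (hγrange : ∀ j, ∃ i l, γ j = tilde i l)
    (lbl : Fin (N * L) → Fin L) (hlbl : ∀ j, ∃ i, γ j = tilde i (lbl j))
    (R : Fin (N * L) → Finset (Fin L))
    (hR : ∀ j l, l ∈ R j ↔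
      ∃ i, 0 < rmod Γ (tilde i l - γ j) ∧ rmod Γ (tilde i l - γ j) ≤ 2 * δ) :
    ∃ j : Fin (N * L), lbl j ∈ G ∧ R j ⊆ B ∧
      ((R j).card ≤ (L - K) / 2 ∧ lbl j ∉ R j) := by
  have hNR : (1 : ℝ) ≤ N := by exact_mod_cast hN
  have hΓpos : 0 < Γ := by rw [hΓ]; nlinarith
  have hΓ4 : 4 * δ ≤ Γ := by rw [hΓ]; nlinarith
  -- G is nonempty
  have hGne : G.Nonempty := by
    rw [Finset.nonempty_iff_ne_empty]
    intro h
    rw [h, Finset.empty_union] at hGB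
    have hcard : B.card = L := by rw [hGB]; simp
    omega
  obtain ⟨l0, hl0⟩ := hGne
  -- markers and the gap
  set p : Fin N → ℝ := fun i => rc i - δ with hp
  obtain ⟨i0, hi0⟩ := exists_gap hN hδ hΓ p
  set q : ℝ := p i0 with hq0
  -- the set of good residues
  set S : Finset ℝ :=
    ((Finset.univ : Finset (Fin N)) ×ˢ G).image (fun pr => tilde pr.1 pr.2) with hSdef
  have hSne : S.Nonempty := ⟨tilde ⟨0, hN⟩ l0, Finset.mem_image.mpr
    ⟨(⟨0, hN⟩, l0), Finset.mem_product.mpr ⟨Finset.mem_univ _, hl0⟩, rfl⟩⟩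
  have hmemS : ∀ i l, l ∈ G → tilde i l ∈ S := fun i l hl =>
    Finset.mem_image.mpr ⟨(i, l), Finset.mem_product.mpr ⟨Finset.mem_univ _, hl⟩, rfl⟩
  -- every good residue avoids [2δ, 4δ] after q
  have hqS : ∀ z ∈ S, rmod Γ (z - q) < 2 * δ ∨ 4 * δ < rmod Γ (z - q) := by
    intro z hz
    obtain ⟨⟨i, l⟩, hmem, rfl⟩ := Finset.mem_image.mp hz
    have hlG : l ∈ G := (Finset.mem_product.mp hmem).2
    have habs := abs_lt.mp (hΔ i l hlG)
    set t : ℝ := Δ i l + δ with ht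
    have ht0 : 0 < t := by simp [ht]; linarith [habs.1]
    have ht2 : t < 2 * δ := by simp [ht]; linarith [habs.2]
    set a : ℝ := rmod Γ (p i - q) with ha
    have haΓ : a < Γ := rmod_lt hΓpos _
    have ha0 : 0 ≤ a := rmod_nonneg hΓpos _
    have hcg : rmod Γ (tilde i l - q) = rmod Γ (a + t) := by
      apply rmod_congr hΓpos
      obtain ⟨n1, hn1⟩ := exists_int_sub_rmod Γ (rc i + Δ i l)
      obtain ⟨n2, hn2⟩ := exists_int_sub_rmod Γ (p i - q)
      refine ⟨n2 - n1, ?_⟩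
      have hz1 : tilde i l = rmod Γ (rc i + Δ i l) := htilde i l
      push_cast
      have hpiq : p i = rc i - δ := rfl
      rw [hz1]
      nlinarith [hn1, hn2]
    rcases hi0 i with h0 | h4
    · left
      rw [hcg]
      have : a = 0 := h0
      rw [this, zero_add, rmod_eq_self hΓpos ht0.le (by linarith)]
      linarith
    · have h4' : 4 * δ ≤ a := h4
      rcases lt_or_ge (a + t) Γ with hlt | hge
      · right
        rw [hcg, rmod_eq_self hΓpos (by linarith) hlt]
        linarith
      · left
        rw [hcg]
        have hcg2 : rmod Γ (a + t) = rmod Γ (a + t - Γ) := by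
          apply rmod_congr hΓpos
          exact ⟨1, by push_cast; ring⟩
        rw [hcg2, rmod_eq_self hΓpos (by linarith) (by linarith)]
        linarith
  -- the maximizer
  obtain ⟨x, hxS, hxmax⟩ := circle_main hδ hΓpos hΓ4 S hSne q hqS
  obtain ⟨⟨istar, lstar⟩, hmemstar, hxeq⟩ := Finset.mem_image.mp hxS
  have hlstarG : lstar ∈ G := (Finset.mem_product.mp hmemstar).2
  -- γ is surjective onto the set of all residues
  have hxT : ∃ j, γ j = x := by
    set T : Finset ℝ :=
      (Finset.univ : Finset (Fin N × Fin L)).image (fun pr => tilde pr.1 pr.2) with hT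
    set Tγ : Finset ℝ := (Finset.univ : Finset (Fin (N * L))).image γ with hTγ
    have hsub : Tγ ⊆ T := by
      intro z hz
      obtain ⟨j, _, rfl⟩ := Finset.mem_image.mp hz
      obtain ⟨i, l, hil⟩ := hγrange j
      exact Finset.mem_image.mpr ⟨(i, l), Finset.mem_univ _, hil.symm⟩
    have hcardT : T.card = N * L := by
      rw [hT, Finset.card_image_of_injective _ hinj]
      simp
    have hcardTγ : Tγ.card = N * L := by
      rw [hTγ, Finset.card_image_of_injective _ hγmono.injective]
      simp
    have hTeq : Tγ = T := Finset.eq_of_subset_of_card_le hsub (by omega)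
    have hxinT : x ∈ T :=
      Finset.mem_image.mpr ⟨(istar, lstar), Finset.mem_univ _, hxeq⟩
    rw [← hTeq] at hxinT
    obtain ⟨j, _, hj⟩ := Finset.mem_image.mp hxinT
    exact ⟨j, hj⟩
  obtain ⟨j, hj⟩ := hxT
  -- the label of j is lstar
  have hlblj : lbl j = lstar := by
    obtain ⟨i', hi'⟩ := hlbl j
    have : tilde i' (lbl j) = tilde istar lstar := by rw [← hi', hj, hxeq]
    have hpair : (i', lbl j) = (istar, lstar) := hinj this
    exact (Prod.mk.injEq _ _ _ _ ▸ hpair).2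
  have hlbljG : lbl j ∈ G := hlblj ▸ hlstarG
  -- R j ⊆ B
  have hRB : R j ⊆ B := by
    intro l hl
    obtain ⟨i, hi1, hi2⟩ := (hR j l).mp hl
    by_cases hlG : l ∈ G
    · exfalso
      have := hxmax (tilde i l) (hmemS i l hlG)
      rw [hj] at hi1 hi2
      exact this ⟨hi1, hi2⟩
    · have : l ∈ G ∪ B := hGB ▸ Finset.mem_univ l
      rcases Finset.mem_union.mp this with h | h
      · exact absurd h hlG
      · exact h
  refine ⟨j, hlbljG, hRB, le_trans (Finset.card_le_card hRB) hB, ?_⟩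
  intro hmem
  exact (Finset.disjoint_left.mp hGBdisj) hlbljG (hRB hmem)
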